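/- Let L be a bounded distributive lattice and let f : L^n → L be an associative symmetric lattice polynomial function (symmetric meaning invariant under every permutation of its variables). Then f(x) = med(a, med(⋀_{i=1}^n x_i, b, ⋁_{i=1}^n x_i), d) for all x ∈ L^n, where a = f(0,…,0), b = f(1,0,…,0), d = f(1,…,1), and med(u,v,w) = (u ∨ v) ∧ (u ∨ w) ∧ (v ∨ w). -/

import Mathlib

variable {X : Type*}

/-- The string consisting of the single letter `g y` if `y` is nonempty, and the
empty string if `y` is empty (the convention `g ε = ε`). -/
def strOf (g : List X → X) (y : List X) : List X :=
  match y with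
  | [] => []
  | _ => [g y]

/-- Associativity for functions on strings. -/
def AssocStar (g : List X → X) : Prop :=
  ∀ x y z x' y' z' : List X, x ++ y ++ z = x' ++ y' ++ z' →
    g (x ++ strOf g y ++ z) = g (x' ++ strOf g y' ++ z')

/-- Range-idempotency for functions on strings. -/
def RangeIdem (g : List X → X) : Prop :=
  ∀ x : List X, x ≠ [] → ∀ n : ℕ, 1 ≤ n → g (List.replicate n (g x)) = g x

/-- Application of an `n`-ary function to a list of length `n`. -/
def liftF {n : ℕ} (f : (Fin n → X) → X) (l : List X) (h : l.length = n) : X :=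
  f fun i => l.get (Fin.cast h.symm i)

/-- Associativity for `n`-ary functions. -/
def AssocFin {n : ℕ} (f : (Fin n → X) → X) : Prop :=
  ∀ (x z x' z' y y' : List X) (hy : y.length = n) (hy' : y'.length = n),
    x.length + z.length = n - 1 → x'.length + z'.length = n - 1 →
    x ++ y ++ z = x' ++ y' ++ z' →
    ∀ (h : (x ++ [liftF f y hy] ++ z).length = n)
      (h' : (x' ++ [liftF f y' hy'] ++ z').length = n),
      liftF f (x ++ [liftF f y hy] ++ z) h = liftF f (x' ++ [liftF f y' hy'] ++ z') h'

variable {L : Type*} [DistribLattice L] [BoundedOrder L]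

/-- Lattice polynomial functions: representable in disjunctive normal form. -/
def IsPolynomialFn {n : ℕ} (f : (Fin n → L) → L) : Prop :=
  ∃ α : Finset (Fin n) → L,
    ∀ x : Fin n → L, f x = Finset.univ.sup fun I : Finset (Fin n) => α I ⊓ I.inf x

/-- The ternary median. -/
def med (a b c : L) : L := (a ⊔ b) ⊓ (a ⊔ c) ⊓ (b ⊔ c)

/-- The characteristic vector of `I ⊆ [n]`. -/
def charVec {n : ℕ} (I : Finset (Fin n)) : Fin n → L := fun i => if i ∈ I then ⊤ else ⊥

/-- A function on strings all of whose `n`-ary components (`n ≥ 1`) are polynomial. -/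
def IsPolyStar (g : List L → L) : Prop :=
  ∀ n : ℕ, 1 ≤ n → IsPolynomialFn fun x : Fin n → L => g (List.ofFn x)

/-!
A lattice polynomial function is determined by its values on characteristic vectors:
`f x = ⋁_I f(e_I) ⊓ ⋀_{i ∈ I} x_i`, and by symmetry `f(e_I)` depends only on `|I|`.
For `0 < k < n`, associativity applied to `1^k 0^(2n-1-k)` bracketed as
`f(f(1^k 0^(n-k)) 0^(n-1))` and as `f(1^k 0^(n-1-k) f(0^n))` forces `f(e_I) = b` when `|I| = k`:
the first side is `f(c, 0, …, 0) = b` for some `c ≥ b`, the second is squeezed between `f(e_I)`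
and `f(e_I ⊔ a) = f(e_I) ⊔ (a ⊓ f 1) = f(e_I)`. Hence `f x = a ⊔ (b ⊓ ⋁ x) ⊔ (d ⊓ ⋀ x)`,
which is the median expression because `a ≤ b ≤ d`.
-/

open Finset

lemma liftF_ofFn {n : ℕ} (f : (Fin n → X) → X) (g : Fin n → X) (h : (List.ofFn g).length = n) :
    liftF f (List.ofFn g) h = f g := by
  simp [liftF]

lemma liftF_of_eq_ofFn {n : ℕ} (f : (Fin n → X) → X) {l : List X} (h : l.length = n)
    {g : Fin n → X} (hl : l = List.ofFn g) : liftF f l h = f g := by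
  subst hl
  exact liftF_ofFn f g h

lemma List.ofFn_ite_lt {n k : ℕ} (hk : k ≤ n) (t c : X) :
    List.ofFn (fun i : Fin n => if (i : ℕ) < k then t else c) =
      List.replicate k t ++ List.replicate (n - k) c := by
  apply List.ext_getElem (by simp; omega)
  intro i _ _
  simp [List.getElem_append]

lemma List.ofFn_ite_eq_zero {n : ℕ} (hn : 1 ≤ n) (y c : X) :
    List.ofFn (fun i : Fin n => if (i : ℕ) = 0 then y else c) = y :: List.replicate (n - 1) c := by
  apply List.ext_getElem (by simp; omega)
  intro i _ _
  cases i <;> simp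

lemma List.ofFn_ite_lt_ite_lt {n k : ℕ} (hk : k < n) (t c y : X) :
    List.ofFn (fun i : Fin n => if (i : ℕ) < k then t else if (i : ℕ) < n - 1 then c else y) =
      List.replicate k t ++ List.replicate (n - 1 - k) c ++ [y] := by
  apply List.ext_getElem (by simp; omega)
  intro i _ _
  simp only [List.getElem_append, List.getElem_replicate, List.length_append,
    List.length_replicate, List.getElem_singleton, List.getElem_ofFn]
  split_ifs <;> first | rfl | omega

theorem AssocFin.apply_ite_eq {n k : ℕ} {f : (Fin n → X) → X} (hf : AssocFin f) (hk : k < n)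
    (t c : X) :
    f (fun i => if (i : ℕ) = 0 then f (fun j => if (j : ℕ) < k then t else c) else c) =
      f (fun i => if (i : ℕ) < k then t else if (i : ℕ) < n - 1 then c else f fun _ => c) := by
  -- bracket `t^k c^(n-k) c^(n-1)` once as `(t^k c^(n-k)) c^(n-1)`, once as `t^k c^(n-1-k) (c^n)`
  have key := hf [] (List.replicate (n - 1) c) (List.replicate k t ++ List.replicate (n - 1 - k) c)
    [] (List.ofFn fun j : Fin n => if (j : ℕ) < k then t else c) (List.ofFn fun _ : Fin n => c)
    (by simp) (by simp) (by simp) (by simp; omega)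
    (by
      simp only [List.ofFn_ite_lt hk.le, List.ofFn_const, List.nil_append, List.append_nil,
        List.append_assoc, ← List.replicate_add]
      congr 2; omega)
    (by simp; omega) (by simp; omega)
  rw [liftF_of_eq_ofFn f (l := [] ++ [_] ++ _) _ (by rw [List.ofFn_ite_eq_zero (by omega)]; rfl),
    liftF_of_eq_ofFn f (l := _ ++ [_] ++ [])
      _ (by rw [List.ofFn_ite_lt_ite_lt hk, List.append_nil])] at key
  simpa only [liftF_ofFn] using key

section Median

variable {L : Type*} [DistribLattice L]

lemma med_eq_sup_inf_of_le {u w : L} (v : L) (h : u ≤ w) : med u v w = (u ⊔ v) ⊓ w := by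
  rw [med, sup_eq_right.2 h, inf_assoc, inf_eq_left.2 (le_sup_right : w ≤ v ⊔ w)]

lemma med_med_eq_sup_inf {a b d P S : L} (hab : a ≤ b) (hbd : b ≤ d) (hPS : P ≤ S) :
    med a (med P b S) d = a ⊔ (b ⊓ S) ⊔ (d ⊓ P) := by
  have had := hab.trans hbd
  calc med a (med P b S) d = (a ⊔ (P ⊔ b ⊓ S)) ⊓ d := by
        rw [med_eq_sup_inf_of_le _ had, med_eq_sup_inf_of_le _ hPS, inf_sup_right P b S,
          inf_eq_left.2 hPS]
    _ = a ⊓ d ⊔ (b ⊓ S ⊓ d) ⊔ (P ⊓ d) := by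
        rw [inf_sup_right, inf_sup_right, sup_assoc, sup_comm (P ⊓ d)]
    _ = a ⊔ (b ⊓ S) ⊔ (d ⊓ P) := by
        rw [inf_eq_left.2 had, inf_eq_left.2 (inf_le_left.trans hbd), inf_comm P]

end Median

section Lattice

variable {n : ℕ}

lemma inf_charVec (I J : Finset (Fin n)) :
    J.inf (charVec I : Fin n → L) = if J ⊆ I then ⊤ else ⊥ := by
  split_ifs with h
  · exact (Finset.inf_eq_top_iff _ _).2 fun j hj => by simp [charVec, h hj]
  · obtain ⟨j, hjJ, hjI⟩ := not_subset.1 h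
    exact le_bot_iff.1 ((inf_le hjJ).trans (by simp [charVec, hjI]))

lemma charVec_mono {I J : Finset (Fin n)} (h : I ⊆ J) : (charVec I : Fin n → L) ≤ charVec J :=
  fun i => by
    by_cases hi : i ∈ I
    · simp [charVec, hi, h hi]
    · simp [charVec, hi]

@[simp]
lemma charVec_empty : (charVec ∅ : Fin n → L) = fun _ => ⊥ := by
  funext i
  simp [charVec]

@[simp]
lemma charVec_univ : (charVec univ : Fin n → L) = fun _ => ⊤ := by
  funext i
  simp [charVec]

lemma charVec_comp_perm (σ : Equiv.Perm (Fin n)) (I : Finset (Fin n)) :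
    (charVec (I.map σ.toEmbedding) : Fin n → L) ∘ σ = charVec I := by
  funext i
  simp [charVec]

lemma apply_charVec_eq_of_card_eq {f : (Fin n → L) → L}
    (hsym : ∀ (σ : Equiv.Perm (Fin n)) (x : Fin n → L), f (x ∘ σ) = f x) {I J : Finset (Fin n)}
    (h : I.card = J.card) : f (charVec I) = f (charVec J) := by
  obtain ⟨σ, rfl⟩ := Equiv.Perm.exists_map_finset_eq I J h
  rw [← charVec_comp_perm σ I, hsym]

namespace IsPolynomialFn

variable {f : (Fin n → L) → L}

lemma monotone (hf : IsPolynomialFn f) : Monotone f := by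
  obtain ⟨α, hα⟩ := hf
  intro x y hxy
  rw [hα x, hα y]
  exact sup_mono_fun fun I _ => inf_le_inf_left _ (inf_mono_fun fun i _ => hxy i)

lemma charVec_inf_le (hf : IsPolynomialFn f) (I : Finset (Fin n)) (x : Fin n → L) :
    f (charVec I) ⊓ I.inf x ≤ f x := by
  obtain ⟨α, hα⟩ := hf
  rw [hα, sup_inf_distrib_right]
  refine Finset.sup_le fun J _ => ?_
  rw [inf_charVec]
  split_ifs with hJI
  · rw [inf_top_eq, hα]
    exact le_sup_of_le (mem_univ J) (inf_le_inf_left _ (inf_mono hJI))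
  · simp

lemma le_sup_charVec_inf (hf : IsPolynomialFn f) (x : Fin n → L) :
    f x ≤ univ.sup fun I => f (charVec I) ⊓ I.inf x := by
  obtain ⟨α, hα⟩ := hf
  rw [hα]
  refine sup_mono_fun fun I _ => inf_le_inf_right _ ?_
  rw [hα]
  exact le_sup_of_le (mem_univ I) (by simp [inf_charVec])

lemma apply_sup_const (hf : IsPolynomialFn f) (x : Fin n → L) (c : L) :
    f (x ⊔ fun _ => c) = f x ⊔ (c ⊓ f fun _ => ⊤) := by
  obtain ⟨α, hα⟩ := hf
  calc f (x ⊔ fun _ => c) = univ.sup fun I => α I ⊓ I.inf x ⊔ c ⊓ α I := by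
        simp_rw [hα, Pi.sup_def, ← Finset.inf_sup_distrib_right, inf_sup_left, inf_comm _ c]
    _ = f x ⊔ (c ⊓ f fun _ => ⊤) := by
        simp only [hα, Finset.inf_top, inf_top_eq, sup_inf_distrib_left, ← sup_sup]
        rfl

theorem apply_charVec_Iio (hf : IsPolynomialFn f) (hassoc : AssocFin f) {k : ℕ} (hk0 : 1 ≤ k)
    (hk : k < n) : f (charVec (Iio ⟨k, hk⟩)) = f (charVec {⟨0, by omega⟩}) := by
  set C := f (charVec (Iio ⟨k, hk⟩))
  have hbC : f (charVec {⟨0, by omega⟩}) ≤ C :=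
    hf.monotone (charVec_mono (by simp [Fin.lt_def]; omega))
  have haC : (f fun _ => ⊥) ≤ C := hf.monotone fun _ => bot_le
  have key := hassoc.apply_ite_eq hk (⊤ : L) ⊥
  have hvec : (fun j : Fin n => if (j : ℕ) < k then (⊤ : L) else ⊥) = charVec (Iio ⟨k, hk⟩) := by
    funext j
    simp [charVec, Fin.lt_def]
  rw [hvec] at key
  have hleft : f (fun i : Fin n => if (i : ℕ) = 0 then C else ⊥) = f (charVec {⟨0, by omega⟩}) := by
    refine le_antisymm (hf.monotone fun i => ?_) ?_
    · simp only [charVec, mem_singleton, Fin.ext_iff]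
      split_ifs <;> simp
    · exact (le_inf le_rfl (by simpa using hbC)).trans (hf.charVec_inf_le _ _)
  have hright : f (fun i : Fin n => if (i : ℕ) < k then ⊤ else if (i : ℕ) < n - 1 then ⊥
      else f fun _ => ⊥) = C := by
    refine le_antisymm ?_ (hf.monotone fun i => ?_)
    · calc _ ≤ f (charVec (Iio ⟨k, hk⟩) ⊔ fun _ => f fun _ => ⊥) := hf.monotone fun i => ?_
        _ = C := by rw [hf.apply_sup_const, sup_eq_left.2 (inf_le_left.trans haC)]
      simp only [charVec, Pi.sup_apply, mem_Iio, Fin.lt_def]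
      split_ifs <;> simp
    · simp only [charVec, mem_Iio, Fin.lt_def]
      split_ifs <;> simp
  rw [← hleft, key, hright]

theorem eq_sup_inf_of_charVec (hf : IsPolynomialFn f) {b : L}
    (hsingle : ∀ i, b ≤ f (charVec {i}))
    (hmid : ∀ I : Finset (Fin n), I.Nonempty → I ≠ univ → f (charVec I) ≤ b) (x : Fin n → L) :
    f x = (f fun _ => ⊥) ⊔ (b ⊓ univ.sup x) ⊔ ((f fun _ => ⊤) ⊓ univ.inf x) := by
  refine le_antisymm ((hf.le_sup_charVec_inf x).trans (Finset.sup_le fun I _ => ?_))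
    (sup_le (sup_le ?_ ?_) ?_)
  · rcases I.eq_empty_or_nonempty with rfl | hne
    · simp [sup_assoc]
    by_cases hI : I = univ
    · subst hI
      simp
    obtain ⟨i, hi⟩ := hne
    exact le_sup_of_le_left (le_sup_of_le_right
      (inf_le_inf (hmid I ⟨i, hi⟩ hI) ((inf_le hi).trans (le_sup (mem_univ i)))))
  · simpa using hf.charVec_inf_le ∅ x
  · rw [sup_inf_distrib_left]
    exact Finset.sup_le fun i _ =>
      (inf_le_inf (hsingle i) (by simp)).trans (hf.charVec_inf_le {i} x)
  · simpa using hf.charVec_inf_le univ x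

end IsPolynomialFn

end Lattice

/-- an associative symmetric lattice polynomial function `f : Lⁿ → L`
satisfies `f(x) = med(a, med(⋀ᵢ xᵢ, b, ⋁ᵢ xᵢ), d)` with `a = f(0,…,0)`,
`b = f(1,0,…,0)`, `d = f(1,…,1)`. -/
theorem stmt12 {n : ℕ} (hn : 1 ≤ n) (f : (Fin n → L) → L)
    (hf : IsPolynomialFn f) (hassoc : AssocFin f)
    (hsym : ∀ (σ : Equiv.Perm (Fin n)) (x : Fin n → L), f (x ∘ σ) = f x)
    (a b d : L)
    (ha : a = f fun _ => ⊥)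
    (hb : b = f (charVec {(⟨0, by omega⟩ : Fin n)}))
    (hd : d = f fun _ => ⊤)
    (x : Fin n → L) :
    f x = med a (med (Finset.univ.inf x) b (Finset.univ.sup x)) d := by
  have hab : a ≤ b := ha ▸ hb ▸ hf.monotone fun _ => bot_le
  have hbd : b ≤ d := hd ▸ hb ▸ hf.monotone fun _ => le_top
  have hsingle (i : Fin n) : b ≤ f (charVec {i}) :=
    (hb.trans (apply_charVec_eq_of_card_eq hsym (by simp))).le
  have hmid (I : Finset (Fin n)) (hne : I.Nonempty) (hI : I ≠ univ) : f (charVec I) ≤ b := by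
    have hk : I.card < n := by simpa using card_lt_card (ssubset_univ_iff.2 hI)
    rw [apply_charVec_eq_of_card_eq hsym (J := Iio ⟨I.card, hk⟩) (by simp),
      hf.apply_charVec_Iio hassoc (card_pos.2 hne) hk, hb]
  have hinf_le_sup : univ.inf x ≤ univ.sup x :=
    (inf_le (mem_univ ⟨0, hn⟩)).trans (le_sup (mem_univ _))
  rw [hf.eq_sup_inf_of_charVec hsingle hmid x, ← ha, ← hd, med_med_eq_sup_inf hab hbd hinf_le_sup]
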